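/- (Block factorization of the recent response indicators.) Under the mth-order Markov model, for every integer k with 1 < k ≤ K − m − 1 and all values of the variables, f(R̄ᵐₖ | Ȳₖ, O̲^{m+1}_{k−1}) = ∏_{j=max(1,k−m)}^{k−1} f(Rⱼ | Ȳ^{m+1}_{j+1}, O̲ᵐⱼ), i.e., the conditional pmf of the block (R_{max(1,k−m)},…,R_{k−1}) given (Y₁,…,Y_{k−1}, O_k,…,O_{min(k+m,K)}) equals the product over j of the conditional pmfs of Rⱼ given (Y_{max(1,j−m)},…,Yⱼ, O_{j+1},…,O_{min(j+m,K)}), where the O-arguments in each factor are determined by the conditioning values. -/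
import Mathlib


open scoped Classical BigOperators

namespace MRM

/-- Observed datum at index `j`: `some (y j)` if `r j = true` (observed), otherwise `none`
(missing, i.e. the value `?`). -/
def obs {K : ℕ} (y r : Fin K → Bool) (j : Fin K) : Option Bool :=
  if r j then some (y j) else none

/-- Probability of an event under the joint pmf `p` on outcomes and response indicators. -/
noncomputable def Pr {K : ℕ} (p : (Fin K → Bool) → (Fin K → Bool) → ℝ)
    (E : (Fin K → Bool) → (Fin K → Bool) → Prop) : ℝ :=
  ∑ y : Fin K → Bool, ∑ r : Fin K → Bool, if E y r then p y r else 0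

/-- Conditional probability `P(A | C)` under `p`. -/
noncomputable def cPr {K : ℕ} (p : (Fin K → Bool) → (Fin K → Bool) → ℝ)
    (A C : (Fin K → Bool) → (Fin K → Bool) → Prop) : ℝ :=
  Pr p (fun y r => A y r ∧ C y r) / Pr p C

/-- Event: the outcomes at the 1-based positions `lo ≤ pos ≤ hi` take the values `yv pos`.
(If `hi < lo`, or the window is out of range, this is the trivial event, matching the
convention that a vector whose lower index exceeds its upper index is the null vector.) -/
def Yeq {K : ℕ} (lo hi : ℕ) (yv : ℕ → Bool) :
    (Fin K → Bool) → (Fin K → Bool) → Prop :=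
  fun y _ => ∀ j : Fin K, lo ≤ j.1 + 1 → j.1 + 1 ≤ hi → y j = yv (j.1 + 1)

/-- Event: the response indicators at positions `lo ≤ pos ≤ hi` take the values `rv pos`. -/
def Req {K : ℕ} (lo hi : ℕ) (rv : ℕ → Bool) :
    (Fin K → Bool) → (Fin K → Bool) → Prop :=
  fun _ r => ∀ j : Fin K, lo ≤ j.1 + 1 → j.1 + 1 ≤ hi → r j = rv (j.1 + 1)

/-- Event: the observed data at positions `lo ≤ pos ≤ hi` take the values `ov pos`. -/
def Oeq {K : ℕ} (lo hi : ℕ) (ov : ℕ → Option Bool) :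
    (Fin K → Bool) → (Fin K → Bool) → Prop :=
  fun y r => ∀ j : Fin K, lo ≤ j.1 + 1 → j.1 + 1 ≤ hi → obs y r j = ov (j.1 + 1)

/-- The `m`-th order Markov model:
`p(y, r) = ∏ₖ aₖ(yₖ | ȳᵐₖ) · bₖ(rₖ | ȳᵐₖ, yₖ, o̲ᵐₖ)`, where `aₖ` and `bₖ` are strictly
positive conditional pmfs in their first argument, `aₖ` depends only on the outcomes at
1-based positions `max(1, k − m), …, k`, and `bₖ` depends only on `rₖ`, the outcomes at
positions `max(1, k − m), …, k` and the observed data at positions `k + 1, …, min(k + m, K)`.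
Indices of `Fin K` are 0-based, so the 1-based paper position of `k : Fin K` is `k.1 + 1`. -/
structure Markov (K m : ℕ) where
  p : (Fin K → Bool) → (Fin K → Bool) → ℝ
  a : Fin K → (Fin K → Bool) → ℝ
  b : Fin K → (Fin K → Bool) → (Fin K → Bool) → ℝ
  a_pos : ∀ k y, 0 < a k y
  b_pos : ∀ k y r, 0 < b k y r
  a_pmf : ∀ (k : Fin K) (y : Fin K → Bool), ∑ v : Bool, a k (Function.update y k v) = 1
  b_pmf : ∀ (k : Fin K) (y r : Fin K → Bool), ∑ v : Bool, b k y (Function.update r k v) = 1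
  a_local : ∀ (k : Fin K) (y y' : Fin K → Bool),
    (∀ j : Fin K, k.1 + 1 - m ≤ j.1 + 1 → j.1 ≤ k.1 → y j = y' j) → a k y = a k y'
  b_local : ∀ (k : Fin K) (y r y' r' : Fin K → Bool), r k = r' k →
    (∀ j : Fin K, k.1 + 1 - m ≤ j.1 + 1 → j.1 ≤ k.1 → y j = y' j) →
    (∀ j : Fin K, k.1 < j.1 → j.1 + 1 ≤ k.1 + 1 + m → obs y r j = obs y' r' j) →
    b k y r = b k y' r'
  factor : ∀ y r, p y r = ∏ k : Fin K, a k y * b k y r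
  sum_one : ∑ y : Fin K → Bool, ∑ r : Fin K → Bool, p y r = 1

/-- Real value of a binary outcome. -/
def yVal (v : Bool) : ℝ := if v then 1 else 0

/-- `cₖ(ȳᵐₖ, o̲ᵐₖ; α) = E[exp(α Yₖ) | Rₖ = 1, Ȳᵐₖ = ȳᵐₖ, O̲ᵐₖ = o̲ᵐₖ]` (`k` is 1-based). -/
noncomputable def cfun {K : ℕ} (p : (Fin K → Bool) → (Fin K → Bool) → ℝ) (m : ℕ) (α : ℝ)
    (k : ℕ) (yv : ℕ → Bool) (ov : ℕ → Option Bool) : ℝ :=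
  ∑ v : Bool, Real.exp (α * yVal v) *
    cPr p (Yeq k k (fun _ => v))
      (fun y r => Req k k (fun _ => true) y r ∧ Yeq (k - m) (k - 1) yv y r ∧
        Oeq (k + 1) (k + m) ov y r)

/-- The exponential tilting restriction with sensitivity parameters `α k` (`k` is 1-based):
`f(Yₖ | Rₖ = 0, Ȳᵐₖ, O̲ᵐₖ) = f(Yₖ | Rₖ = 1, Ȳᵐₖ, O̲ᵐₖ) · exp(αₖ Yₖ) / cₖ(Ȳᵐₖ, O̲ᵐₖ; αₖ)`. -/
def Tilt {K : ℕ} (p : (Fin K → Bool) → (Fin K → Bool) → ℝ) (m : ℕ) (α : ℕ → ℝ) : Prop :=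
  ∀ (k : ℕ), 1 ≤ k → k ≤ K → ∀ (yv : ℕ → Bool) (ov : ℕ → Option Bool),
    cPr p (Yeq k k yv)
      (fun y r => Req k k (fun _ => false) y r ∧ Yeq (k - m) (k - 1) yv y r ∧
        Oeq (k + 1) (k + m) ov y r)
    = cPr p (Yeq k k yv)
        (fun y r => Req k k (fun _ => true) y r ∧ Yeq (k - m) (k - 1) yv y r ∧
          Oeq (k + 1) (k + m) ov y r)
      * Real.exp (α k * yVal (yv k)) / cfun p m (α k) k yv ov

section Aux

variable {K m : ℕ}

lemma p_pos (M : Markov K m) (y r : Fin K → Bool) : 0 < M.p y r := by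
  rw [M.factor]
  exact Finset.prod_pos fun i _ => mul_pos (M.a_pos i y) (M.b_pos i y r)

lemma Pr_pos (M : Markov K m) (E : (Fin K → Bool) → (Fin K → Bool) → Prop)
    (h : ∃ y r, E y r) : 0 < Pr M.p E := by
  obtain ⟨y0, r0, h0⟩ := h
  refine Finset.sum_pos' (fun y _ => Finset.sum_nonneg fun r _ => ?_) ⟨y0, Finset.mem_univ _, ?_⟩
  · split
    · exact (p_pos M y r).le
    · exact le_refl 0
  · refine Finset.sum_pos' (fun r _ => ?_) ⟨r0, Finset.mem_univ _, ?_⟩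
    · split
      · exact (p_pos M y0 r).le
      · exact le_refl 0
    · rw [if_pos h0]; exact p_pos M y0 r0

lemma Pr_congr {p : (Fin K → Bool) → (Fin K → Bool) → ℝ}
    {E E' : (Fin K → Bool) → (Fin K → Bool) → Prop}
    (h : ∀ y r, E y r ↔ E' y r) : Pr p E = Pr p E' := by
  unfold Pr
  exact Finset.sum_congr rfl fun y _ => Finset.sum_congr rfl fun r _ =>
    if_congr (h y r) rfl rfl

lemma cPr_congr {p : (Fin K → Bool) → (Fin K → Bool) → ℝ}
    {A A' C C' : (Fin K → Bool) → (Fin K → Bool) → Prop}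
    (hA : ∀ y r, C y r → (A y r ↔ A' y r)) (hC : ∀ y r, C y r ↔ C' y r) :
    cPr p A C = cPr p A' C' := by
  have h1 : ∀ y r, (A y r ∧ C y r) ↔ (A' y r ∧ C' y r) := by
    intro y r
    constructor
    · rintro ⟨ha, hc⟩
      exact ⟨(hA y r hc).1 ha, (hC y r).1 hc⟩
    · rintro ⟨ha, hc⟩
      have hc' := (hC y r).2 hc
      exact ⟨(hA y r hc').2 ha, hc'⟩
  unfold cPr
  rw [Pr_congr h1, Pr_congr hC]

lemma filter_split (t : ℕ) (ht : t < K) :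
    Finset.univ.filter (fun i : Fin K => t ≤ i.1)
    = insert (⟨t, ht⟩ : Fin K) (Finset.univ.filter (fun i : Fin K => t + 1 ≤ i.1)) := by
  ext i
  simp only [Finset.mem_filter, Finset.mem_univ, true_and, Finset.mem_insert, Fin.ext_iff]
  omega

lemma not_mem_filter_succ (t : ℕ) (ht : t < K) :
    (⟨t, ht⟩ : Fin K) ∉ Finset.univ.filter (fun i : Fin K => t + 1 ≤ i.1) := by
  simp

lemma obs_congr {y r r' : Fin K → Bool} {i : Fin K} (h : r i = r' i) (h2 : r i = true → y i = y i) :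
    obs y r i = obs y r' i := by
  unfold obs; rw [h]

/-- `b i` does not change when `r` is updated at a position strictly below `i`. -/
lemma b_update_high (M : Markov K m) (i q : Fin K) (y r : Fin K → Bool) (v : Bool)
    (h : q.1 < i.1) : M.b i y (Function.update r q v) = M.b i y r := by
  refine M.b_local i y (Function.update r q v) y r ?_ (fun j _ _ => rfl) ?_
  · exact Function.update_of_ne (Fin.ne_of_val_ne (by omega)) _ _
  · intro j hj _
    unfold obs
    rw [Function.update_of_ne (Fin.ne_of_val_ne (by omega)) _ _]

/-- Summing `p y ·` over all `r'` that agree with `r` on positions `≥ t` : the `b` factors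
below `t` integrate out. -/
lemma tail_sum (M : Markov K m) (y : Fin K → Bool) :
    ∀ (t : ℕ) (r : Fin K → Bool),
    (∑ r' : Fin K → Bool, if (∀ i : Fin K, t ≤ i.1 → r' i = r i) then M.p y r' else 0)
    = (∏ i : Fin K, M.a i y) *
      ∏ i ∈ Finset.univ.filter (fun i : Fin K => t ≤ i.1), M.b i y r := by
  intro t
  induction t with
  | zero =>
    intro r
    have h1 : ∀ r' : Fin K → Bool, (∀ i : Fin K, 0 ≤ i.1 → r' i = r i) ↔ r' = r := by
      intro r'
      constructor
      · intro h; funext i; exact h i (Nat.zero_le _)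
      · intro h i _; rw [h]
    rw [Finset.sum_congr rfl (fun r' _ => if_congr (h1 r') rfl rfl),
      Finset.sum_ite_eq' Finset.univ r (fun r' => M.p y r'), if_pos (Finset.mem_univ r),
      M.factor]
    have h2 : Finset.univ.filter (fun i : Fin K => 0 ≤ i.1) = Finset.univ :=
      Finset.filter_true_of_mem (fun _ _ => Nat.zero_le _)
    rw [h2, Finset.prod_mul_distrib]
  | succ t ih =>
    intro r
    by_cases hK : t < K
    · set jt : Fin K := ⟨t, hK⟩ with hjt
      have hjtv : (jt : Fin K).1 = t := rfl
      have key : ∀ r' : Fin K → Bool,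
          (if (∀ i : Fin K, t + 1 ≤ i.1 → r' i = r i) then M.p y r' else 0)
          = ∑ v : Bool, (if (∀ i : Fin K, t ≤ i.1 → r' i = Function.update r jt v i)
              then M.p y r' else 0) := by
        intro r'
        rw [Fintype.sum_bool]
        by_cases hc : ∀ i : Fin K, t + 1 ≤ i.1 → r' i = r i
        · have htv : ∀ v : Bool,
              ((∀ i : Fin K, t ≤ i.1 → r' i = Function.update r jt v i) ↔ v = r' jt) := by
            intro v
            constructor
            · intro h
              have := h jt (le_refl t)
              rw [Function.update_self] at this
              exact this.symm
            · intro hv i hi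
              by_cases hij : i = jt
              · subst hij; rw [Function.update_self, hv]
              · rw [Function.update_of_ne hij]
                exact hc i (by
                  have : i.1 ≠ t := fun e => hij (Fin.ext e)
                  omega)
          rw [if_pos hc]
          cases hv : r' jt
          · rw [if_neg (fun h => by simp [htv true, hv] at h),
              if_pos ((htv false).2 hv.symm), zero_add]
          · rw [if_pos ((htv true).2 hv.symm),
              if_neg (fun h => by simp [htv false, hv] at h), add_zero]
        · have hnv : ∀ v : Bool, ¬ (∀ i : Fin K, t ≤ i.1 → r' i = Function.update r jt v i) := by
            intro v hcv
            apply hc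
            intro i hi
            have h1 := hcv i (by omega)
            rwa [Function.update_of_ne (Fin.ne_of_val_ne (by omega))] at h1
          rw [if_neg hc, if_neg (hnv true), if_neg (hnv false), add_zero]
      rw [Finset.sum_congr rfl (fun r' _ => key r'), Finset.sum_comm]
      have step2 : ∀ v : Bool,
          (∑ r' : Fin K → Bool,
            if (∀ i : Fin K, t ≤ i.1 → r' i = Function.update r jt v i) then M.p y r' else 0)
          = (∏ i : Fin K, M.a i y) *
            (M.b jt y (Function.update r jt v) *
              ∏ i ∈ Finset.univ.filter (fun i : Fin K => t + 1 ≤ i.1), M.b i y r) := by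
        intro v
        rw [ih (Function.update r jt v), filter_split t hK,
          Finset.prod_insert (not_mem_filter_succ t hK)]
        congr 1
        congr 1
        refine Finset.prod_congr rfl fun i hi => ?_
        simp only [Finset.mem_filter, Finset.mem_univ, true_and] at hi
        exact b_update_high M i jt y r v (by omega)
      rw [Finset.sum_congr rfl (fun v _ => step2 v)]
      calc ∑ v : Bool, (∏ i : Fin K, M.a i y) *
            (M.b jt y (Function.update r jt v) *
              ∏ i ∈ Finset.univ.filter (fun i : Fin K => t + 1 ≤ i.1), M.b i y r)
          = (∑ v : Bool, M.b jt y (Function.update r jt v)) *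
            ((∏ i : Fin K, M.a i y) *
              ∏ i ∈ Finset.univ.filter (fun i : Fin K => t + 1 ≤ i.1), M.b i y r) := by
            rw [Finset.sum_mul]
            exact Finset.sum_congr rfl fun v _ => by ring
        _ = (∏ i : Fin K, M.a i y) *
              ∏ i ∈ Finset.univ.filter (fun i : Fin K => t + 1 ≤ i.1), M.b i y r := by
            rw [M.b_pmf jt y r, one_mul]
    · push_neg at hK
      have hv1 : ∀ (s : ℕ) (r' : Fin K → Bool), t ≤ s →
          (∀ i : Fin K, s ≤ i.1 → r' i = r i) := by
        intro s r' hs i hi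
        exact absurd hi (by omega)
      have he : ∀ s : ℕ, t ≤ s →
          Finset.univ.filter (fun i : Fin K => s ≤ i.1) = (∅ : Finset (Fin K)) := by
        intro s hs
        ext i
        simp only [Finset.mem_filter, Finset.mem_univ, true_and, Finset.notMem_empty, iff_false]
        omega
      rw [Finset.sum_congr rfl (fun r' _ => if_pos (hv1 (t+1) r' (by omega))),
        ← Finset.sum_congr rfl (fun r' _ => if_pos (hv1 t r' (le_refl t))),
        ih r, he t (le_refl t), he (t+1) (by omega)]

/-- Reduce a sum of `G r * p y r` (for `G` depending only on positions `≥ t`) to canonical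
representatives. -/
lemma tail_local_sum (M : Markov K m) (y : Fin K → Bool) (t : ℕ)
    (G : (Fin K → Bool) → ℝ)
    (hG : ∀ r r', (∀ i : Fin K, t ≤ i.1 → r i = r' i) → G r = G r') :
    ∑ r : Fin K → Bool, G r * M.p y r
    = ∑ r : Fin K → Bool, (if (∀ i : Fin K, i.1 < t → r i = false)
        then G r * ((∏ i : Fin K, M.a i y) *
          ∏ i ∈ Finset.univ.filter (fun i : Fin K => t ≤ i.1), M.b i y r)
        else 0) := by
  have step1 : ∀ r : Fin K → Bool,
      (if (∀ i : Fin K, i.1 < t → r i = false)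
        then G r * ((∏ i : Fin K, M.a i y) *
          ∏ i ∈ Finset.univ.filter (fun i : Fin K => t ≤ i.1), M.b i y r)
        else 0)
      = ∑ r' : Fin K → Bool,
          (if ((∀ i : Fin K, i.1 < t → r i = false) ∧ (∀ i : Fin K, t ≤ i.1 → r' i = r i))
            then G r * M.p y r' else 0) := by
    intro r
    by_cases hl : ∀ i : Fin K, i.1 < t → r i = false
    · rw [if_pos hl, ← tail_sum M y t r, Finset.mul_sum]
      refine Finset.sum_congr rfl fun r' _ => ?_
      by_cases ha : ∀ i : Fin K, t ≤ i.1 → r' i = r i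
      · rw [if_pos ha, if_pos ⟨hl, ha⟩]
      · rw [if_neg ha, if_neg (fun h => ha h.2), mul_zero]
    · rw [if_neg hl]
      symm
      refine Finset.sum_eq_zero fun r' _ => ?_
      rw [if_neg (fun h => hl h.1)]
  rw [Finset.sum_congr rfl (fun r _ => step1 r), Finset.sum_comm]
  symm
  refine Finset.sum_congr rfl fun r' _ => ?_
  have hval : G (fun i : Fin K => if i.1 < t then false else r' i) = G r' := by
    refine hG _ _ fun i hi => ?_
    show (if (i.1 : ℕ) < t then false else r' i) = r' i
    rw [if_neg (by omega)]
  rw [Finset.sum_eq_single (fun i : Fin K => if i.1 < t then false else r' i)]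
  · rw [if_pos, hval]
    constructor
    · intro i hi
      show (if (i.1 : ℕ) < t then false else r' i) = false
      rw [if_pos hi]
    · intro i hi
      show r' i = (if (i.1 : ℕ) < t then false else r' i)
      rw [if_neg (by omega)]
  · intro r _ hr
    rw [if_neg]
    rintro ⟨h1, h2⟩
    apply hr
    funext i
    show r i = (if (i.1 : ℕ) < t then false else r' i)
    by_cases hi : (i.1 : ℕ) < t
    · rw [if_pos hi]; exact h1 i hi
    · rw [if_neg hi]; exact (h2 i (by omega)).symm
  · intro h; exact absurd (Finset.mem_univ _) h

/-- Event nonemptiness for a conjunction of `Yeq`, `Oeq` and `Req` constraints, when the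
`Yeq` and `Req` windows lie strictly below the `Oeq` window. -/
lemma nonempty_YOR (lo1 hi1 : ℕ) (yv : ℕ → Bool) (lo2 hi2 : ℕ) (ov : ℕ → Option Bool)
    (lo3 hi3 : ℕ) (rv : ℕ → Bool) (h1 : hi1 < lo2) (h3 : hi3 < lo2) :
    ∃ y r : Fin K → Bool, Yeq lo1 hi1 yv y r ∧ Oeq lo2 hi2 ov y r ∧ Req lo3 hi3 rv y r := by
  refine ⟨fun i => if i.1 + 1 < lo2 then yv (i.1 + 1) else (ov (i.1 + 1)).getD false,
    fun i => if i.1 + 1 < lo2 then rv (i.1 + 1) else (ov (i.1 + 1)).isSome, ?_, ?_, ?_⟩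
  · intro i _ hhi
    show (if (i.1 : ℕ) + 1 < lo2 then yv (i.1 + 1) else (ov (i.1 + 1)).getD false) = yv (i.1 + 1)
    rw [if_pos (by omega)]
  · intro i hlo _
    have hge : ¬ ((i.1 : ℕ) + 1 < lo2) := by omega
    simp only [obs, if_neg hge]
    cases hov : ov (i.1 + 1) <;> simp [hov]
  · intro i _ hhi
    show (if (i.1 : ℕ) + 1 < lo2 then rv (i.1 + 1) else (ov (i.1 + 1)).isSome) = rv (i.1 + 1)
    rw [if_pos (by omega)]

lemma telescope (D : ℕ → ℝ) (hD : ∀ t, D t ≠ 0) :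
    ∀ (hi lo : ℕ), lo ≤ hi + 1 →
      ∏ j ∈ Finset.Icc lo hi, (D j / D (j + 1)) = D lo / D (hi + 1) := by
  intro hi
  induction hi with
  | zero =>
    intro lo hlo
    interval_cases lo
    · rw [Finset.Icc_self, Finset.prod_singleton]
    · rw [Finset.Icc_eq_empty (by omega), Finset.prod_empty, eq_comm]
      exact div_self (hD 1)
  | succ n ih =>
    intro lo hlo
    rcases Nat.lt_or_ge lo (n + 2) with h | h
    · have h' : lo ≤ n + 1 := by omega
      rw [Finset.prod_Icc_succ_top h', ih lo h', div_mul_div_comm,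
        mul_comm (D lo) (D (n + 1)), mul_div_mul_left _ _ (hD (n + 1))]
    · have hlo2 : lo = n + 2 := by omega
      subst hlo2
      rw [Finset.Icc_eq_empty (by omega), Finset.prod_empty, eq_comm]
      exact div_self (hD (n + 2))

/-- The residual sum appearing in the master lemma. -/
noncomputable def resid (M : Markov K m) (jF : Fin K)
    (C : (Fin K → Bool) → (Fin K → Bool) → Prop) (w : Bool) : ℝ :=
  ∑ y : Fin K → Bool, ∑ r : Fin K → Bool,
    (if ((∀ i : Fin K, i.1 < jF.1 → r i = false) ∧ r jF = w ∧ C y r)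
      then (∏ i : Fin K, M.a i y) *
        ∏ i ∈ Finset.univ.filter (fun i : Fin K => jF.1 + 1 ≤ i.1), M.b i y r
      else 0)

/-- **Master lemma**: if the conditioning event `C` depends on `r` only at positions
strictly above `jF`, and determines the outcomes on the window `[jF-m, jF]` and the
observed data on `(jF, jF+m]` (with representative values `yh`, `rh`), then the
conditional probability of `R jF = v` given `C` is the corresponding `b` value. -/
lemma master (M : Markov K m) (jF : Fin K) (v : Bool)
    (C : (Fin K → Bool) → (Fin K → Bool) → Prop)
    (hloc : ∀ y r r', (∀ i : Fin K, jF.1 < i.1 → r i = r' i) → C y r → C y r')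
    (yh rh : Fin K → Bool)
    (hw : ∀ y r, C y r → ∀ i : Fin K, jF.1 + 1 - m ≤ i.1 + 1 → i.1 ≤ jF.1 → y i = yh i)
    (ho : ∀ y r, C y r → ∀ i : Fin K, jF.1 < i.1 → i.1 + 1 ≤ jF.1 + 1 + m →
      obs y r i = obs yh rh i)
    (hne : ∃ y r, C y r) :
    cPr M.p (fun y r => r jF = v) C = M.b jF yh (Function.update rh jF v) := by
  have hsplit : Finset.univ.filter (fun i : Fin K => jF.1 ≤ i.1)
      = insert jF (Finset.univ.filter (fun i : Fin K => jF.1 + 1 ≤ i.1)) := by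
    rw [filter_split jF.1 jF.2]
  have hnotmem : jF ∉ Finset.univ.filter (fun i : Fin K => jF.1 + 1 ≤ i.1) :=
    not_mem_filter_succ jF.1 jF.2
  have bridge : ∀ w : Bool, Pr M.p (fun y r => r jF = w ∧ C y r)
      = ∑ y : Fin K → Bool, ∑ r : Fin K → Bool,
          if (r jF = w ∧ C y r) then M.p y r else 0 := by
    intro w
    unfold Pr
    refine Finset.sum_congr rfl fun y _ => Finset.sum_congr rfl fun r _ => ?_
    by_cases h : r jF = w ∧ C y r <;> simp [h]
  have key : ∀ w : Bool, (∑ y : Fin K → Bool, ∑ r : Fin K → Bool,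
      if (r jF = w ∧ C y r) then M.p y r else 0)
      = M.b jF yh (Function.update rh jF w) * resid M jF C w := by
    intro w
    unfold resid
    rw [Finset.mul_sum]
    refine Finset.sum_congr rfl fun y _ => ?_
    have hG : ∀ r r' : Fin K → Bool, (∀ i : Fin K, jF.1 ≤ i.1 → r i = r' i) →
        (if (r jF = w ∧ C y r) then (1:ℝ) else 0)
        = (if (r' jF = w ∧ C y r') then (1:ℝ) else 0) := by
      intro r r' hag
      have h1 : r jF = r' jF := hag jF (le_refl jF.1)
      have h2 : C y r ↔ C y r' := by
        constructor
        · exact hloc y r r' (fun i hi => hag i (by omega))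
        · exact hloc y r' r (fun i hi => (hag i (by omega)).symm)
      exact if_congr (by rw [h1, h2]) rfl rfl
    have e1 : ∀ r : Fin K → Bool, (if (r jF = w ∧ C y r) then M.p y r else 0)
        = (if (r jF = w ∧ C y r) then (1:ℝ) else 0) * M.p y r := by
      intro r; split <;> simp
    rw [Finset.sum_congr rfl (fun r _ => e1 r),
      tail_local_sum M y jF.1 (fun r => if (r jF = w ∧ C y r) then (1:ℝ) else 0) hG,
      Finset.mul_sum]
    refine Finset.sum_congr rfl fun r _ => ?_
    by_cases hl : ∀ i : Fin K, i.1 < jF.1 → r i = false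
    · by_cases hc : r jF = w ∧ C y r
      · rw [if_pos hl, if_pos hc, if_pos ⟨hl, hc⟩, one_mul, hsplit,
          Finset.prod_insert hnotmem]
        have hb : M.b jF y r = M.b jF yh (Function.update rh jF w) := by
          refine M.b_local jF y r yh (Function.update rh jF w) ?_ ?_ ?_
          · rw [Function.update_self]; exact hc.1
          · exact fun i hi1 hi2 => hw y r hc.2 i hi1 hi2
          · intro i hi1 hi2
            rw [ho y r hc.2 i hi1 hi2]
            unfold obs
            rw [Function.update_of_ne (Fin.ne_of_val_ne (by omega))]
        rw [hb]; ring
      · rw [if_pos hl, if_neg hc, if_neg (fun h => hc h.2), zero_mul, mul_zero]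
    · rw [if_neg hl, if_neg (fun h => hl h.1), mul_zero]
  have flip : resid M jF C true = resid M jF C false := by
    unfold resid
    refine Finset.sum_congr rfl fun y _ => ?_
    have hinv : Function.Involutive
        (fun r : Fin K → Bool => Function.update r jF (!(r jF))) := by
      intro r
      funext i
      by_cases hi : i = jF
      · subst hi; simp
      · simp [Function.update_of_ne hi]
    have hcomp := Equiv.sum_comp (Function.Involutive.toPerm _ hinv)
      (fun r : Fin K → Bool =>
        (if ((∀ i : Fin K, i.1 < jF.1 → r i = false) ∧ r jF = true ∧ C y r)
          then (∏ i : Fin K, M.a i y) *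
            ∏ i ∈ Finset.univ.filter (fun i : Fin K => jF.1 + 1 ≤ i.1), M.b i y r
          else 0))
    rw [← hcomp]
    refine Finset.sum_congr rfl fun r _ => ?_
    simp only [Function.Involutive.coe_toPerm]
    have hlow : ∀ i : Fin K, i.1 < jF.1 →
        Function.update r jF (!(r jF)) i = r i := fun i hi =>
      Function.update_of_ne (Fin.ne_of_val_ne (by omega)) _ _
    have hCu : C y (Function.update r jF (!(r jF))) ↔ C y r := by
      constructor
      · exact hloc y _ r fun i hi => Function.update_of_ne (Fin.ne_of_val_ne (by omega)) _ _
      · exact hloc y r _ fun i hi =>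
          (Function.update_of_ne (Fin.ne_of_val_ne (by omega)) _ _).symm
    have hcnd : ((∀ i : Fin K, i.1 < jF.1 → Function.update r jF (!(r jF)) i = false)
          ∧ Function.update r jF (!(r jF)) jF = true ∧ C y (Function.update r jF (!(r jF))))
        ↔ ((∀ i : Fin K, i.1 < jF.1 → r i = false) ∧ r jF = false ∧ C y r) := by
      constructor
      · rintro ⟨ha, hb, hc⟩
        rw [Function.update_self] at hb
        refine ⟨fun i hi => (hlow i hi).symm.trans (ha i hi), ?_, hCu.1 hc⟩
        cases hv : r jF
        · rfl
        · rw [hv] at hb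
          exact absurd hb (by simp)
      · rintro ⟨ha, hb, hc⟩
        refine ⟨fun i hi => (hlow i hi).trans (ha i hi), ?_, hCu.2 hc⟩
        rw [Function.update_self, hb]
        rfl
    have hprod : ∏ i ∈ Finset.univ.filter (fun i : Fin K => jF.1 + 1 ≤ i.1),
          M.b i y (Function.update r jF (!(r jF)))
        = ∏ i ∈ Finset.univ.filter (fun i : Fin K => jF.1 + 1 ≤ i.1), M.b i y r := by
      refine Finset.prod_congr rfl fun i hi => ?_
      simp only [Finset.mem_filter, Finset.mem_univ, true_and] at hi
      exact b_update_high M i jF y r _ (by omega)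
    exact if_congr hcnd (by rw [hprod]) rfl
  have denom : Pr M.p C = Pr M.p (fun y r => r jF = true ∧ C y r)
      + Pr M.p (fun y r => r jF = false ∧ C y r) := by
    unfold Pr
    rw [← Finset.sum_add_distrib]
    refine Finset.sum_congr rfl fun y _ => ?_
    rw [← Finset.sum_add_distrib]
    refine Finset.sum_congr rfl fun r _ => ?_
    by_cases hc : C y r
    · cases hv : r jF <;> simp [hc, hv]
    · simp [hc]
  have bsum : M.b jF yh (Function.update rh jF true)
      + M.b jF yh (Function.update rh jF false) = 1 := by
    have := M.b_pmf jF yh rh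
    rwa [Fintype.sum_bool] at this
  have hSC : Pr M.p C = resid M jF C false := by
    rw [denom, bridge true, bridge false, key true, key false, flip, ← add_mul, bsum, one_mul]
  have hSpos : 0 < resid M jF C false := by
    rw [← hSC]
    exact Pr_pos M C hne
  have hnum : Pr M.p (fun y r => r jF = v ∧ C y r)
      = M.b jF yh (Function.update rh jF v) * resid M jF C false := by
    rw [bridge v]
    cases v
    · exact key false
    · rw [key true, flip]
  have hfrac : Pr M.p (fun y r => r jF = v ∧ C y r) / Pr M.p C
      = M.b jF yh (Function.update rh jF v) := by
    rw [hnum, hSC, mul_div_assoc, div_self (ne_of_gt hSpos), mul_one]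
  exact hfrac

lemma obs_eq_of_r_eq {y r r' : Fin K → Bool} {i : Fin K} (h : r i = r' i) :
    obs y r i = obs y r' i := by
  unfold obs
  rw [h]

/-- Canonical representative for the outcomes given window values. -/
def yhat (j : ℕ) (yv : ℕ → Bool) (ot : ℕ → Option Bool) : Fin K → Bool :=
  fun i => if i.1 + 1 ≤ j then yv (i.1 + 1) else (ot (i.1 + 1)).getD false

/-- Canonical representative for the response indicators given observed-data values. -/
def rhat (ot : ℕ → Option Bool) : Fin K → Bool :=
  fun i => (ot (i.1 + 1)).isSome

lemma yhat_le {j : ℕ} {yv : ℕ → Bool} {ot : ℕ → Option Bool} {i : Fin K}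
    (h : i.1 + 1 ≤ j) : yhat j yv ot i = yv (i.1 + 1) := if_pos h

lemma obs_yhat {j : ℕ} {yv : ℕ → Bool} {ot : ℕ → Option Bool} {i : Fin K}
    (h : ¬ (i.1 + 1 ≤ j)) : obs (yhat j yv ot) (rhat ot) i = ot (i.1 + 1) := by
  unfold obs yhat rhat
  cases hov : ot (i.1 + 1) <;> simp [hov, h]

end Aux

/-- Block factorization of the recent response indicators.  Under the
`m`th-order Markov model, for every `1 < k ≤ K − m − 1` and all values of the variables,
`f(R̄ᵐₖ | Ȳₖ, O̲^{m+1}_{k−1}) = ∏_{j=max(1,k−m)}^{k−1} f(Rⱼ | Ȳ^{m+1}_{j+1}, O̲ᵐⱼ)`,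
where the `O`-arguments in each factor are determined by the conditioning values
(`Oⱼ = ov j` for the conditioned positions `j ≥ k`, and `Oⱼ = (rv j, yv j)` for
positions `j < k`, determined by the conditioned outcomes and the block values). -/
theorem statement10 (K m : ℕ) (hm : 1 ≤ m) (hKm : 2 * m + 1 < K) (M : Markov K m)
    (k : ℕ) (hk1 : 1 < k) (hk2 : k ≤ K - m - 1)
    (yv : ℕ → Bool) (rv : ℕ → Bool) (ov : ℕ → Option Bool) :
    cPr M.p (Req (k - m) (k - 1) rv)
        (fun y r => Yeq 1 (k - 1) yv y r ∧ Oeq k (k + m) ov y r)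
      = ∏ j ∈ Finset.Icc (k - m) (k - 1),
          cPr M.p (Req j j rv)
            (fun y r => Yeq (j - m) j yv y r ∧
              Oeq (j + 1) (j + m)
                (fun n => if k ≤ n then ov n else if rv n then some (yv n) else none) y r) := by
  have hkK : k + m + 1 ≤ K := by omega
  set ot : ℕ → Option Bool :=
    fun n => if k ≤ n then ov n else if rv n then some (yv n) else none with hot
  have hotval : ∀ n, ot n = if k ≤ n then ov n else if rv n then some (yv n) else none :=
    fun n => by rw [hot]
  set CC : (Fin K → Bool) → (Fin K → Bool) → Prop :=
    fun y r => Yeq 1 (k - 1) yv y r ∧ Oeq k (k + m) ov y r with hCC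
  have hCCval : ∀ y r, CC y r ↔ (Yeq 1 (k - 1) yv y r ∧ Oeq k (k + m) ov y r) :=
    fun y r => by rw [hCC]
  set D : ℕ → ℝ := fun t => Pr M.p (fun y r => CC y r ∧ Req t (k - 1) rv y r) with hDdef
  have hDval : ∀ t, D t = Pr M.p (fun y r => CC y r ∧ Req t (k - 1) rv y r) :=
    fun t => by rw [hDdef]
  have hDpos : ∀ t, 0 < D t := by
    intro t
    rw [hDval t]
    refine Pr_pos M _ ?_
    obtain ⟨y0, r0, h1, h2, h3⟩ := nonempty_YOR (K := K) 1 (k - 1) yv k (k + m) ov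
      t (k - 1) rv (by omega) (by omega)
    exact ⟨y0, r0, (hCCval y0 r0).2 ⟨h1, h2⟩, h3⟩
  have hDne : ∀ t, D t ≠ 0 := fun t => ne_of_gt (hDpos t)
  have hReqTriv : ∀ y r : Fin K → Bool, Req k (k - 1) rv y r :=
    fun y r i h1 h2 => absurd (h1.trans h2) (by omega)
  have hL : cPr M.p (Req (k - m) (k - 1) rv) CC = D (k - m) / D k := by
    show Pr M.p (fun y r => Req (k - m) (k - 1) rv y r ∧ CC y r) / Pr M.p CC
      = D (k - m) / D k
    rw [hDval (k - m), hDval k]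
    congr 1
    · exact Pr_congr fun y r => and_comm
    · exact Pr_congr fun y r => ⟨fun h => ⟨h, hReqTriv y r⟩, fun h => h.1⟩
  have htel := telescope D hDne (k - 1) (k - m) (by omega)
  rw [show k - 1 + 1 = k by omega] at htel
  have hfold : ∀ j ∈ Finset.Icc (k - m) (k - 1), D j / D (j + 1)
      = cPr M.p (Req j j rv)
          (fun y r => Yeq (j - m) j yv y r ∧ Oeq (j + 1) (j + m) ot y r) := by
    intro j hj
    rw [Finset.mem_Icc] at hj
    by_cases hj0 : j = 0
    · subst hj0
      have hD01 : D 0 = D 1 := by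
        rw [hDval 0, hDval 1]
        refine Pr_congr fun y r => ?_
        constructor
        · rintro ⟨h1, h2⟩; exact ⟨h1, fun i ha hb => h2 i (by omega) hb⟩
        · rintro ⟨h1, h2⟩; exact ⟨h1, fun i ha hb => h2 i (by omega) hb⟩
      have hR0 : cPr M.p (Req 0 0 rv)
          (fun y r => Yeq (0 - m) 0 yv y r ∧ Oeq (0 + 1) (0 + m) ot y r) = 1 := by
        have hne0 : Pr M.p (fun y r => Yeq (0 - m) 0 yv y r ∧ Oeq (0 + 1) (0 + m) ot y r)
            ≠ 0 := by
          refine ne_of_gt (Pr_pos M _ ?_)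
          obtain ⟨y0, r0, h1, h2, _⟩ := nonempty_YOR (K := K) (0 - m) 0 yv (0 + 1) (0 + m) ot
            0 0 rv (by omega) (by omega)
          exact ⟨y0, r0, h1, h2⟩
        show Pr M.p (fun y r => Req 0 0 rv y r
              ∧ (Yeq (0 - m) 0 yv y r ∧ Oeq (0 + 1) (0 + m) ot y r))
            / Pr M.p (fun y r => Yeq (0 - m) 0 yv y r ∧ Oeq (0 + 1) (0 + m) ot y r) = 1
        rw [Pr_congr (E := fun y r => Req 0 0 rv y r
              ∧ (Yeq (0 - m) 0 yv y r ∧ Oeq (0 + 1) (0 + m) ot y r))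
            (E' := fun y r => Yeq (0 - m) 0 yv y r ∧ Oeq (0 + 1) (0 + m) ot y r)
            (fun y r => and_iff_right (fun i h1 h2 => absurd h2 (by omega)))]
        exact div_self hne0
      rw [hD01, hR0]
      exact div_self (hDne 1)
    · have hj1 : 1 ≤ j := by omega
      have hjK : j - 1 < K := by omega
      set jF : Fin K := ⟨j - 1, hjK⟩ with hjF
      have hv : (jF : Fin K).1 = j - 1 := rfl
      have hleft0 : cPr M.p (fun y r => r jF = rv j)
          (fun y r => CC y r ∧ Req (j + 1) (k - 1) rv y r)
          = M.b jF (yhat j yv ot) (Function.update (rhat ot) jF (rv j)) := by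
        refine master M jF (rv j) _ ?_ (yhat j yv ot) (rhat ot) ?_ ?_ ?_
        · rintro y r r' hag ⟨hcc, hreq⟩
          obtain ⟨hY, hO⟩ := (hCCval y r).1 hcc
          refine ⟨(hCCval y r').2 ⟨hY, fun i hlo hhi => ?_⟩, fun i hlo hhi => ?_⟩
          · rw [← obs_eq_of_r_eq (hag i (by omega))]
            exact hO i hlo hhi
          · rw [← hag i (by omega)]
            exact hreq i hlo hhi
        · rintro y r ⟨hcc, hreq⟩ i h1 h2
          obtain ⟨hY, hO⟩ := (hCCval y r).1 hcc
          rw [yhat_le (by omega)]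
          exact hY i (by omega) (by omega)
        · rintro y r ⟨hcc, hreq⟩ i hgt hle
          obtain ⟨hY, hO⟩ := (hCCval y r).1 hcc
          rw [obs_yhat (by omega), hotval]
          by_cases hk : k ≤ i.1 + 1
          · rw [if_pos hk]
            exact hO i hk (by omega)
          · rw [if_neg hk]
            have hr : r i = rv (i.1 + 1) := hreq i (by omega) (by omega)
            have hy : y i = yv (i.1 + 1) := hY i (by omega) (by omega)
            unfold obs
            rw [hr, hy]
        · obtain ⟨y0, r0, h1, h2, h3⟩ := nonempty_YOR (K := K) 1 (k - 1) yv k (k + m) ov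
            (j + 1) (k - 1) rv (by omega) (by omega)
          exact ⟨y0, r0, (hCCval y0 r0).2 ⟨h1, h2⟩, h3⟩
      have hDfac : D j / D (j + 1) = cPr M.p (fun y r => r jF = rv j)
          (fun y r => CC y r ∧ Req (j + 1) (k - 1) rv y r) := by
        show D j / D (j + 1)
          = Pr M.p (fun y r => r jF = rv j ∧ (CC y r ∧ Req (j + 1) (k - 1) rv y r))
            / Pr M.p (fun y r => CC y r ∧ Req (j + 1) (k - 1) rv y r)
        rw [hDval j, hDval (j + 1)]
        congr 1
        refine Pr_congr fun y r => ?_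
        constructor
        · rintro ⟨hcc, hreq⟩
          refine ⟨?_, hcc, fun i h1 h2 => hreq i (by omega) h2⟩
          have h := hreq jF (by omega) (by omega)
          rw [h]
          congr 1
          omega
        · rintro ⟨h1, hcc, hreq⟩
          refine ⟨hcc, fun i hlo hhi => ?_⟩
          by_cases hij : i.1 + 1 = j
          · have e : i = jF := Fin.ext (by omega)
            rw [e, h1]
            congr 1
            omega
          · exact hreq i (by omega) hhi
      have hA : ∀ y r : Fin K → Bool,
          (Yeq (j - m) j yv y r ∧ Oeq (j + 1) (j + m) ot y r) →
          (Req j j rv y r ↔ r jF = rv j) := by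
        intro y r _
        constructor
        · intro h
          have h2 := h jF (by omega) (by omega)
          rw [h2]
          congr 1
          omega
        · intro h i hlo hhi
          have e : i = jF := Fin.ext (by omega)
          rw [e, h]
          congr 1
          omega
      have hright0 : cPr M.p (Req j j rv)
          (fun y r => Yeq (j - m) j yv y r ∧ Oeq (j + 1) (j + m) ot y r)
          = M.b jF (yhat j yv ot) (Function.update (rhat ot) jF (rv j)) := by
        refine Eq.trans (cPr_congr (p := M.p) (A := Req j j rv)
          (A' := fun y r => r jF = rv j)
          (C := fun y r => Yeq (j - m) j yv y r ∧ Oeq (j + 1) (j + m) ot y r)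
          (C' := fun y r => Yeq (j - m) j yv y r ∧ Oeq (j + 1) (j + m) ot y r)
          hA (fun y r => Iff.rfl)) ?_
        refine master M jF (rv j) _ ?_ (yhat j yv ot) (rhat ot) ?_ ?_ ?_
        · rintro y r r' hag ⟨hY, hO⟩
          refine ⟨hY, fun i hlo hhi => ?_⟩
          rw [← obs_eq_of_r_eq (hag i (by omega))]
          exact hO i hlo hhi
        · rintro y r ⟨hY, hO⟩ i h1 h2
          rw [yhat_le (by omega)]
          exact hY i (by omega) (by omega)
        · rintro y r ⟨hY, hO⟩ i hgt hle
          rw [obs_yhat (by omega)]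
          exact hO i (by omega) (by omega)
        · obtain ⟨y0, r0, h1, h2, _⟩ := nonempty_YOR (K := K) (j - m) j yv (j + 1) (j + m) ot
            0 0 rv (by omega) (by omega)
          exact ⟨y0, r0, h1, h2⟩
      exact hDfac.trans (hleft0.trans hright0.symm)
  calc cPr M.p (Req (k - m) (k - 1) rv) CC = D (k - m) / D k := hL
    _ = ∏ j ∈ Finset.Icc (k - m) (k - 1), (D j / D (j + 1)) := htel.symm
    _ = ∏ j ∈ Finset.Icc (k - m) (k - 1),
        cPr M.p (Req j j rv)
          (fun y r => Yeq (j - m) j yv y r ∧ Oeq (j + 1) (j + m) ot y r) :=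
      Finset.prod_congr rfl hfold


end MRM
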